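/- arXiv:1405.6379 — 2 statements merged into one kernel-verified Lean document; each statement's English description precedes it below -/
import Mathlib

section
/- Let Φ be an irreducible crystallographic root system of rank 2 (i.e. of type A_2, B_2 or G_2), k a positive integer, and α, β ∈ Φ⁺ distinct with Δ = {α, β}. Set p₋ := H_α^k ∩ H_β^k and p₊ := H_α^{−k} ∩ H_β^{−k}. Then {H_γ^s : γ ∈ Φ⁺, −k ≤ s ≤ k, p₋ ⊆ H_γ^s} = {H_α^k, H_β^k}, and likewise {H_γ^s : γ ∈ Φ⁺, −k ≤ s ≤ k, p₊ ⊆ H_γ^s} = {H_α^{−k}, H_β^{−k}}. -/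
open scoped Classical
open MvPolynomial

noncomputable section

/-- The standard inner (dot) product on Euclidean space `Fin m → ℝ`. -/
def dot {m : ℕ} (x y : Fin m → ℝ) : ℝ := ∑ i, x i * y i

/-- The (central) hyperplane with normal vector `c`. -/
def Hset {m : ℕ} (c : Fin m → ℝ) : Set (Fin m → ℝ) := {v | dot c v = 0}

/-- `Φ` is an irreducible crystallographic (reduced) root system of rank `ℓ` in `ℝ^ℓ`. -/
structure IsIrredCrystRootSystem {ℓ : ℕ} (Φ : Finset (Fin ℓ → ℝ)) : Prop where
  nonzero : ∀ α ∈ Φ, α ≠ 0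
  span_top : Submodule.span ℝ (Φ : Set (Fin ℓ → ℝ)) = ⊤
  reflect_mem : ∀ α ∈ Φ, ∀ β ∈ Φ, β - (2 * dot β α / dot α α) • α ∈ Φ
  crystallographic : ∀ α ∈ Φ, ∀ β ∈ Φ, ∃ n : ℤ, 2 * dot β α / dot α α = (n : ℝ)
  reduced : ∀ α ∈ Φ, ∀ t : ℝ, t • α ∈ Φ → t = 1 ∨ t = -1
  irreducible : ∀ Ψ : Finset (Fin ℓ → ℝ), Ψ ⊆ Φ →
    (∀ α ∈ Ψ, ∀ β ∈ Φ \ Ψ, dot α β = 0) → Ψ = ∅ ∨ Ψ = Φ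

/-- `Δ` (indexed by `Fin ℓ`) is a simple system of the root system `Φ`. -/
structure IsSimpleSystem {ℓ : ℕ} (Φ : Finset (Fin ℓ → ℝ)) (Δ : Fin ℓ → Fin ℓ → ℝ) : Prop where
  mem : ∀ i, Δ i ∈ Φ
  indep : LinearIndependent ℝ Δ
  decomp : ∀ α ∈ Φ, (∃ c : Fin ℓ → ℕ, α = ∑ i, (c i : ℝ) • Δ i) ∨
      (∃ c : Fin ℓ → ℕ, -α = ∑ i, (c i : ℝ) • Δ i)

/-- The positive system `Φ⁺` corresponding to the simple system `Δ`. -/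
def posRoots {ℓ : ℕ} (Φ : Finset (Fin ℓ → ℝ)) (Δ : Fin ℓ → Fin ℓ → ℝ) :
    Finset (Fin ℓ → ℝ) :=
  Φ.filter fun α => ∃ c : Fin ℓ → ℕ, α = ∑ i, (c i : ℝ) • Δ i

/-- `I` is an ideal of the positive system `Φ⁺`: it is closed under going down,
i.e. if `α ∈ I`, `β ∈ Φ⁺` and `α - β` is a nonnegative integer combination of
simple roots, then `β ∈ I`. -/
def IsIdeal {ℓ : ℕ} (Φ : Finset (Fin ℓ → ℝ)) (Δ : Fin ℓ → Fin ℓ → ℝ)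
    (I : Finset (Fin ℓ → ℝ)) : Prop :=
  I ⊆ posRoots Φ Δ ∧
  ∀ α ∈ I, ∀ β ∈ posRoots Φ Δ,
    (∃ c : Fin ℓ → ℕ, α - β = ∑ i, (c i : ℝ) • Δ i) → β ∈ I

/-- `ht` is the height function on `Φ⁺`: `ht (∑ cᵢ αᵢ) = ∑ cᵢ`. -/
def IsHeight {ℓ : ℕ} (Φ : Finset (Fin ℓ → ℝ)) (Δ : Fin ℓ → Fin ℓ → ℝ)
    (ht : (Fin ℓ → ℝ) → ℕ) : Prop :=
  ∀ α ∈ posRoots Φ Δ, ∀ c : Fin ℓ → ℕ, α = ∑ i, (c i : ℝ) • Δ i → ht α = ∑ i, c i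

/-- `h` is the Coxeter number of `Φ`: `h = ht θ + 1` where `θ` is the highest root. -/
def IsCoxeterNumber {ℓ : ℕ} (Φ : Finset (Fin ℓ → ℝ)) (Δ : Fin ℓ → Fin ℓ → ℝ)
    (ht : (Fin ℓ → ℝ) → ℕ) (h : ℕ) : Prop :=
  ∃ θ ∈ posRoots Φ Δ,
    (∀ α ∈ posRoots Φ Δ, ∃ c : Fin ℓ → ℕ, θ - α = ∑ i, (c i : ℝ) • Δ i) ∧ h = ht θ + 1

/-- The embedding `ℝ^ℓ → V = ℝ^{ℓ+1}` (as the first `ℓ` coordinates). -/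
def emb {ℓ : ℕ} (x : Fin ℓ → ℝ) : Fin (ℓ + 1) → ℝ := Fin.snoc x 0

/-- The unit vector `z` in `V = ℝ^{ℓ+1}` orthogonal to `ℝ^ℓ`. -/
def zvec {ℓ : ℕ} : Fin (ℓ + 1) → ℝ := Fin.snoc 0 1

/-- `wht` is the extended height function `w̃ht`:
`w̃ht (α - jz) = -ht α + jh + 1` for `j > 0`, `w̃ht (α - jz) = ht α - jh` for `j ≤ 0`,
and `w̃ht z = 1`. -/
def IsExtHeight {ℓ : ℕ} (Φ : Finset (Fin ℓ → ℝ)) (Δ : Fin ℓ → Fin ℓ → ℝ)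
    (ht : (Fin ℓ → ℝ) → ℕ) (h : ℕ) (wht : (Fin (ℓ + 1) → ℝ) → ℤ) : Prop :=
  (∀ α ∈ posRoots Φ Δ, ∀ j : ℤ, 0 < j →
      wht (emb α - j • zvec) = -(ht α : ℤ) + j * (h : ℤ) + 1) ∧
  (∀ α ∈ posRoots Φ Δ, ∀ j : ℤ, j ≤ 0 →
      wht (emb α - j • zvec) = (ht α : ℤ) - j * (h : ℤ)) ∧
  wht zvec = 1

/-!  Arrangements are recorded by finite sets of normal vectors: the normal
`emb α - j • zvec` corresponds to the hyperplane `H_α^j = {v | (α,v) - j(z,v) = 0}`,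
and `zvec` corresponds to `H_z`.  In all the arrangements considered below distinct
normals define distinct hyperplanes. -/

/-- The cone of the `k`-th extended Shi arrangement :
`{H_α^j : α ∈ Φ⁺, -k+1 ≤ j ≤ k} ∪ {H_z}`. -/
def ShiBase {ℓ : ℕ} (k : ℕ) (P : Finset (Fin ℓ → ℝ)) : Finset (Fin (ℓ + 1) → ℝ) :=
  ((P ×ˢ Finset.Icc (-(k : ℤ) + 1) (k : ℤ)).image fun p => emb p.1 - p.2 • zvec) ∪ {zvec}

/-- `Shi^k_{+T} = {H_α^j : α ∈ Φ⁺, -k+1 ≤ j ≤ k} ∪ {H_z} ∪ {H_α^{-k} : α ∈ T}`. -/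
def ShiPlus {ℓ : ℕ} (k : ℕ) (P T : Finset (Fin ℓ → ℝ)) : Finset (Fin (ℓ + 1) → ℝ) :=
  ShiBase k P ∪ T.image fun α => emb α + (k : ℤ) • zvec

/-- `Shi^k_{-T} = ({H_α^j : α ∈ Φ⁺, -k+1 ≤ j ≤ k} ∪ {H_z}) \ {H_α^k : α ∈ T}`. -/
def ShiMinus {ℓ : ℕ} (k : ℕ) (P T : Finset (Fin ℓ → ℝ)) : Finset (Fin (ℓ + 1) → ℝ) :=
  ShiBase k P \ T.image fun α => emb α - (k : ℤ) • zvec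

/-- The polynomial ring `S = ℝ[x_1, …, x_m]`. -/
abbrev PolyS (m : ℕ) := MvPolynomial (Fin m) ℝ

/-- The defining linear form of the hyperplane with normal vector `c`. -/
def linForm {m : ℕ} (c : Fin m → ℝ) : PolyS m :=
  ∑ i, MvPolynomial.C (c i) * MvPolynomial.X i

/-- The module `D(A, mult)` of logarithmic derivations of the (multi)arrangement whose
hyperplanes have normal vectors `A` with multiplicities `mult`:
`D(A,mult) = {θ : θ(α_H) ∈ S·α_H^{mult H} for all H ∈ A}`.
With `mult = 1` this is the usual module `D(A)`. -/
def DerArr {m : ℕ} (A : Finset (Fin m → ℝ)) (mult : (Fin m → ℝ) → ℕ) :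
    Submodule (PolyS m) (Derivation ℝ (PolyS m) (PolyS m)) where
  carrier := {θ | ∀ c ∈ A, θ (linForm c) ∈ Ideal.span {linForm c ^ mult c}}
  add_mem' := by
    intro a b ha hb c hc
    rw [Derivation.add_apply]
    exact add_mem (ha c hc) (hb c hc)
  zero_mem' := by
    intro c hc
    simp
  smul_mem' := by
    intro p θ hθ c hc
    rw [Derivation.smul_apply, smul_eq_mul]
    exact Ideal.mul_mem_left _ _ (hθ c hc)

/-- A derivation `θ = ∑ fᵢ ∂ᵢ` is homogeneous of (polynomial) degree `d` if each
coefficient `fᵢ = θ(xᵢ)` is homogeneous of degree `d`. -/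
def IsHomogDer {m : ℕ} (θ : Derivation ℝ (PolyS m) (PolyS m)) (d : ℕ) : Prop :=
  ∀ i : Fin m, (θ (MvPolynomial.X i)).IsHomogeneous d

/-- The (multi)arrangement with normals `A` and multiplicity `mult` is free with
exponents `d : Fin m → ℕ` : `D(A,mult)` admits a basis of homogeneous derivations
of degrees `d 0, …, d (m-1)`. -/
def FreeWithExp {m : ℕ} (A : Finset (Fin m → ℝ)) (mult : (Fin m → ℝ) → ℕ)
    (d : Fin m → ℕ) : Prop :=
  ∃ b : Module.Basis (Fin m) (PolyS m) (DerArr A mult),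
    ∀ i, IsHomogDer (b i : Derivation ℝ (PolyS m) (PolyS m)) (d i)

/-- The arrangement with normals `A` (simple multiplicities) is free. -/
def IsFreeArr {m : ℕ} (A : Finset (Fin m → ℝ)) : Prop :=
  ∃ d : Fin m → ℕ, FreeWithExp A (fun _ => 1) d

/-- Freeness with the exponents prescribed as a multiset of integers. -/
def FreeWithExpMultiset {m : ℕ} (A : Finset (Fin m → ℝ)) (mult : (Fin m → ℝ) → ℕ)
    (M : Multiset ℤ) : Prop :=
  ∃ d : Fin m → ℕ, FreeWithExp A mult d ∧
    Multiset.map (fun i => (d i : ℤ)) Finset.univ.val = M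

/-- `d` is the dual partition of the pair `(T, f)` :
for every `i ≥ 1`, `#{j : d j ≥ i} = #(f⁻¹(i) ∩ T)`. -/
def IsDualPartitionOf {m : ℕ} {V : Type*} (d : Fin m → ℕ) (T : Finset V) (f : V → ℤ) :
    Prop :=
  ∀ i : ℕ, 1 ≤ i →
    (Finset.univ.filter fun j => i ≤ d j).card = (T.filter fun v => f v = (i : ℤ)).card

/-! For each level `j ≠ 0` pick `w` with `(αᵢ, w) = j` for every simple root `αᵢ`, so that
`(w, 1)` spans the flat `⋂ᵢ H_{αᵢ}^j`. A positive root `γ = ∑ cᵢ αᵢ` has `(γ, w) = ht γ · j`,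
hence `H_γ^s` contains the flat only if `s = ht γ · j`; the bound `|s| ≤ |j|` then forces
`ht γ = 1`, i.e. `γ` is simple and `s = j`. -/

section

variable {ℓ : ℕ} {Φ : Finset (Fin ℓ → ℝ)} {Δ : Fin ℓ → Fin ℓ → ℝ}

theorem dot_eq_dotProduct (x y : Fin ℓ → ℝ) : dot x y = x ⬝ᵥ y := rfl

theorem dot_sum_smul {ι : Type*} (s : Finset ι) (c : ι → ℝ) (u : ι → Fin ℓ → ℝ)
    (w : Fin ℓ → ℝ) : dot (∑ i ∈ s, c i • u i) w = ∑ i ∈ s, c i * dot (u i) w := by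
  simp only [dot_eq_dotProduct, sum_dotProduct, smul_dotProduct, smul_eq_mul]

theorem exists_dot_eq_of_linearIndependent (hΔ : LinearIndependent ℝ Δ) (t : Fin ℓ → ℝ) :
    ∃ w, ∀ i, dot (Δ i) w = t i := by
  obtain ⟨w, hw⟩ := Matrix.mulVec_surjective_iff_isUnit.mpr
    (Matrix.linearIndependent_rows_iff_isUnit.mp hΔ) t
  exact ⟨w, congrFun hw⟩

theorem dot_emb_sub_zsmul_zvec_snoc (γ w : Fin ℓ → ℝ) (s : ℤ) (r : ℝ) :
    dot (emb γ - s • zvec) (Fin.snoc w r) = dot γ w - s * r := by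
  simp [dot, emb, zvec, Fin.sum_univ_castSucc, sub_eq_add_neg]

theorem snoc_one_mem_Hset_iff (γ w : Fin ℓ → ℝ) (s : ℤ) :
    (Fin.snoc w 1 : Fin (ℓ + 1) → ℝ) ∈ Hset (emb γ - s • zvec) ↔ dot γ w = s := by
  simp only [Hset, Set.mem_ofPred_eq, dot_emb_sub_zsmul_zvec_snoc, mul_one, sub_eq_zero]

theorem exists_eq_pi_single_of_sum_eq_one {ι : Type*} [Fintype ι] [DecidableEq ι]
    {c : ι → ℕ} (h : ∑ i, c i = 1) : ∃ i, c = Pi.single i 1 := by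
  obtain ⟨i, -, hi⟩ := Finset.exists_ne_zero_of_sum_ne_zero (h ▸ one_ne_zero)
  have hsplit := Finset.add_sum_erase Finset.univ c (Finset.mem_univ i)
  have hci : c i = 1 := by omega
  have hrest : ∀ j ∈ Finset.univ.erase i, c j = 0 := Finset.sum_eq_zero_iff.mp (by omega)
  refine ⟨i, funext fun j => ?_⟩
  rcases eq_or_ne j i with rfl | hj
  · simp [hci]
  · simp [hj, hrest j (Finset.mem_erase.mpr ⟨hj, Finset.mem_univ j⟩)]

theorem sum_pi_single_smul (i : Fin ℓ) :
    ∑ j, ((Pi.single i 1 : Fin ℓ → ℕ) j : ℝ) • Δ j = Δ i := by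
  simp [Pi.single_apply]

theorem IsSimpleSystem.mem_posRoots (hΔ : IsSimpleSystem Φ Δ) (i : Fin ℓ) :
    Δ i ∈ posRoots Φ Δ :=
  Finset.mem_filter.mpr ⟨hΔ.mem i, Pi.single i 1, (sum_pi_single_smul i).symm⟩

/-- `simpleFlat Δ k` and `simpleFlat Δ (-k)` are the paper's `p₋` and `p₊`. -/
def simpleFlat (Δ : Fin ℓ → Fin ℓ → ℝ) (j : ℤ) : Set (Fin (ℓ + 1) → ℝ) :=
  ⋂ i, Hset (emb (Δ i) - j • zvec)

theorem posRoot_mem_range_of_simpleFlat_subset (hΦ : ∀ α ∈ Φ, α ≠ 0)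
    (hΔ : IsSimpleSystem Φ Δ) {j s : ℤ} (hj : j ≠ 0) (hs : |s| ≤ |j|) {γ : Fin ℓ → ℝ}
    (hγ : γ ∈ posRoots Φ Δ) (hsub : simpleFlat Δ j ⊆ Hset (emb γ - s • zvec)) :
    γ ∈ Set.range Δ ∧ s = j := by
  obtain ⟨hγΦ, c, rfl⟩ := Finset.mem_filter.mp hγ
  obtain ⟨w, hw⟩ := exists_dot_eq_of_linearIndependent hΔ.indep fun _ => (j : ℝ)
  have hpt : Fin.snoc w 1 ∈ simpleFlat Δ j :=
    Set.mem_iInter.mpr fun i => (snoc_one_mem_Hset_iff _ _ _).mpr (hw i)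
  have hs_eq : s = (∑ i, c i : ℕ) * j := by
    have h := (snoc_one_mem_Hset_iff _ _ _).mp (hsub hpt)
    rw [dot_sum_smul] at h
    simp only [hw, ← Finset.sum_mul] at h
    exact_mod_cast h.symm
  have hht_ne : ∑ i, c i ≠ 0 := fun h0 => hΦ _ hγΦ <| by
    simp [Finset.sum_eq_zero_iff.mp h0]
  have hht : ∑ i, c i = 1 := by
    rw [hs_eq, abs_mul] at hs
    have hj' : 0 < |j| := abs_pos.mpr hj
    have : ((∑ i, c i : ℕ) : ℤ) ≤ 1 := by
      rw [Nat.abs_cast] at hs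
      nlinarith
    omega
  obtain ⟨i, rfl⟩ := exists_eq_pi_single_of_sum_eq_one hht
  exact ⟨⟨i, (sum_pi_single_smul i).symm⟩, by simp [hs_eq, hht]⟩

theorem setOf_Hset_superset_simpleFlat_eq_range (hΦ : ∀ α ∈ Φ, α ≠ 0)
    (hΔ : IsSimpleSystem Φ Δ) {k : ℕ} (hk : 0 < k) {j : ℤ} (hj : |j| = k) :
    ({H | ∃ γ ∈ posRoots Φ Δ, ∃ s : ℤ, -(k : ℤ) ≤ s ∧ s ≤ (k : ℤ) ∧
          H = Hset (emb γ - s • zvec) ∧ simpleFlat Δ j ⊆ H} : Set (Set (Fin (ℓ + 1) → ℝ)))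
      = Set.range fun i => Hset (emb (Δ i) - j • zvec) := by
  ext H
  constructor
  · rintro ⟨γ, hγ, s, hs₁, hs₂, rfl, hsub⟩
    have hj0 : j ≠ 0 := by rintro rfl; simp at hj; omega
    obtain ⟨⟨i, rfl⟩, rfl⟩ := posRoot_mem_range_of_simpleFlat_subset hΦ hΔ hj0
      (hj ▸ abs_le.mpr ⟨hs₁, hs₂⟩) hγ hsub
    exact ⟨i, rfl⟩
  · rintro ⟨i, rfl⟩
    obtain ⟨hj₁, hj₂⟩ := abs_le.mp hj.le
    exact ⟨Δ i, hΔ.mem_posRoots i, j, hj₁, hj₂, rfl, Set.iInter_subset _ i⟩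

end

theorem rank_two_intersection_simple_general (Φ : Finset (Fin 2 → ℝ)) (Δ : Fin 2 → Fin 2 → ℝ)
    (hΦ : IsIrredCrystRootSystem Φ) (hΔ : IsSimpleSystem Φ Δ)
    (k : ℕ) (hk : 0 < k)
    (α β : Fin 2 → ℝ)
    (hΔαβ : ({α, β} : Set (Fin 2 → ℝ)) = Set.range Δ) :
    ({H | ∃ γ ∈ posRoots Φ Δ, ∃ s : ℤ, -(k : ℤ) ≤ s ∧ s ≤ (k : ℤ) ∧
          H = Hset (emb γ - s • zvec) ∧
          Hset (emb α - (k : ℤ) • zvec) ∩ Hset (emb β - (k : ℤ) • zvec) ⊆ H} :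
        Set (Set (Fin 3 → ℝ)))
      = {Hset (emb α - (k : ℤ) • zvec), Hset (emb β - (k : ℤ) • zvec)} ∧
    ({H | ∃ γ ∈ posRoots Φ Δ, ∃ s : ℤ, -(k : ℤ) ≤ s ∧ s ≤ (k : ℤ) ∧
          H = Hset (emb γ - s • zvec) ∧
          Hset (emb α + (k : ℤ) • zvec) ∩ Hset (emb β + (k : ℤ) • zvec) ⊆ H} :
        Set (Set (Fin 3 → ℝ)))
      = {Hset (emb α + (k : ℤ) • zvec), Hset (emb β + (k : ℤ) • zvec)} := by
  have hflat (j : ℤ) : Hset (emb α - j • zvec) ∩ Hset (emb β - j • zvec) = simpleFlat Δ j := by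
    rw [← Set.biInter_pair α β (fun γ => Hset (emb γ - j • zvec)), hΔαβ, Set.biInter_range]
    rfl
  have hpair (j : ℤ) : ({Hset (emb α - j • zvec), Hset (emb β - j • zvec)} : Set (Set _)) =
      Set.range fun i => Hset (emb (Δ i) - j • zvec) := by
    rw [← Set.image_pair (fun γ => Hset (emb γ - j • zvec)), hΔαβ, ← Set.range_comp]
    rfl
  have hplus (γ : Fin 2 → ℝ) : emb γ + (k : ℤ) • zvec = emb γ - (-(k : ℤ)) • zvec := by
    rw [neg_smul, sub_neg_eq_add]
  refine ⟨?_, ?_⟩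
  · rw [hflat, hpair]
    exact setOf_Hset_superset_simpleFlat_eq_range hΦ.nonzero hΔ hk (Nat.abs_cast k)
  · simp only [hplus]
    rw [hflat, hpair]
    exact setOf_Hset_superset_simpleFlat_eq_range hΦ.nonzero hΔ hk (by simp)

/-- **Lemma (Statement 7).** In rank `2`, if `Δ = {α, β}` then among the hyperplanes
`H_γ^s` (`γ ∈ Φ⁺`, `-k ≤ s ≤ k`) the only ones containing `p₋ = H_α^k ∩ H_β^k` are
`H_α^k` and `H_β^k`; likewise for `p₊ = H_α^{-k} ∩ H_β^{-k}`. -/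
theorem rank_two_intersection_simple (Φ : Finset (Fin 2 → ℝ)) (Δ : Fin 2 → Fin 2 → ℝ)
    (hΦ : IsIrredCrystRootSystem Φ) (hΔ : IsSimpleSystem Φ Δ)
    (k : ℕ) (hk : 0 < k)
    (α β : Fin 2 → ℝ) (hα : α ∈ posRoots Φ Δ) (hβ : β ∈ posRoots Φ Δ) (hne : α ≠ β)
    (hΔαβ : ({α, β} : Set (Fin 2 → ℝ)) = Set.range Δ) :
    ({H | ∃ γ ∈ posRoots Φ Δ, ∃ s : ℤ, -(k : ℤ) ≤ s ∧ s ≤ (k : ℤ) ∧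
          H = Hset (emb γ - s • zvec) ∧
          Hset (emb α - (k : ℤ) • zvec) ∩ Hset (emb β - (k : ℤ) • zvec) ⊆ H} :
        Set (Set (Fin 3 → ℝ)))
      = {Hset (emb α - (k : ℤ) • zvec), Hset (emb β - (k : ℤ) • zvec)} ∧
    ({H | ∃ γ ∈ posRoots Φ Δ, ∃ s : ℤ, -(k : ℤ) ≤ s ∧ s ≤ (k : ℤ) ∧
          H = Hset (emb γ - s • zvec) ∧
          Hset (emb α + (k : ℤ) • zvec) ∩ Hset (emb β + (k : ℤ) • zvec) ⊆ H} :
        Set (Set (Fin 3 → ℝ)))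
      = {Hset (emb α + (k : ℤ) • zvec), Hset (emb β + (k : ℤ) • zvec)} :=
  rank_two_intersection_simple_general Φ Δ hΦ hΔ k hk α β hΔαβ

end
end

section
/- Let I ⊆ Φ⁺ be an ideal, and let Y ⊆ ℝ^ℓ be a codimension-2 intersection of hyperplanes H_α (α ∈ Φ⁺). Set Ψ := Φ ∩ Y^⊥, a crystallographic root system of rank 2 (not necessarily irreducible) with positive system Ψ⁺ := Φ⁺ ∩ Y^⊥ and corresponding simple system {γ_1, γ_2}. Then J := I ∩ Ψ⁺ is an ideal of Ψ⁺, i.e. whenever α ∈ J, β ∈ Ψ⁺ and α − β ∈ ℤ_{≥0}γ_1 + ℤ_{≥0}γ_2, then β ∈ J. -/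
open scoped Classical
open MvPolynomial

noncomputable section

theorem exists_natCast_sum_smul_iff_mem_closure_range {ι R M : Type*} [Fintype ι]
    [Semiring R] [AddCommMonoid M] [Module R M] (v : ι → M) (x : M) :
    (∃ c : ι → ℕ, x = ∑ i, (c i : R) • v i) ↔ x ∈ AddSubmonoid.closure (Set.range v) := by
  simp only [Nat.cast_smul_eq_nsmul, AddSubmonoid.mem_closure_range_iff_of_fintype]

theorem mem_closure_of_mem_posRoots {ℓ : ℕ} {Φ : Finset (Fin ℓ → ℝ)} {Δ : Fin ℓ → Fin ℓ → ℝ}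
    {γ : Fin ℓ → ℝ} (hγ : γ ∈ posRoots Φ Δ) : γ ∈ AddSubmonoid.closure (Set.range Δ) :=
  (exists_natCast_sum_smul_iff_mem_closure_range Δ γ).1 (Finset.mem_filter.1 hγ).2

theorem IsIdeal.mem_of_sub_mem_closure {ℓ : ℕ} {Φ : Finset (Fin ℓ → ℝ)}
    {Δ : Fin ℓ → Fin ℓ → ℝ} {I : Finset (Fin ℓ → ℝ)} (hI : IsIdeal Φ Δ I)
    {α β : Fin ℓ → ℝ} (hα : α ∈ I) (hβ : β ∈ posRoots Φ Δ)
    (hαβ : α - β ∈ AddSubmonoid.closure (Set.range Δ)) : β ∈ I :=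
  hI.2 α hα β hβ ((exists_natCast_sum_smul_iff_mem_closure_range Δ _).2 hαβ)

theorem ideal_restriction_is_ideal_general {ℓ : ℕ} (Φ : Finset (Fin ℓ → ℝ))
    (Δ : Fin ℓ → Fin ℓ → ℝ)
    (I : Finset (Fin ℓ → ℝ)) (hI : IsIdeal Φ Δ I)
    (Y : Set (Fin ℓ → ℝ))
    (γ₁ γ₂ : Fin ℓ → ℝ)
    (hγ₁ : γ₁ ∈ posRoots Φ Δ)
    (hγ₂ : γ₂ ∈ posRoots Φ Δ) :
    ∀ α ∈ I, (∀ y ∈ Y, dot α y = 0) →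
      ∀ β ∈ posRoots Φ Δ, (∀ y ∈ Y, dot β y = 0) →
        (∃ a b : ℕ, α - β = (a : ℝ) • γ₁ + (b : ℝ) • γ₂) →
          β ∈ I := by
  rintro α hα - β hβ - ⟨a, b, hab⟩
  refine hI.mem_of_sub_mem_closure hα hβ ?_
  rw [hab, Nat.cast_smul_eq_nsmul, Nat.cast_smul_eq_nsmul]
  exact add_mem (nsmul_mem (mem_closure_of_mem_posRoots hγ₁) a)
    (nsmul_mem (mem_closure_of_mem_posRoots hγ₂) b)

/-- **Lemma (Statement 14).** If `I ⊆ Φ⁺` is an ideal and `Y` is a codimension-two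
intersection of the hyperplanes `H_α` (`α ∈ Φ⁺`), then, `Ψ⁺ := Φ⁺ ∩ Y^⊥` being the
positive system of the rank-two root system `Φ ∩ Y^⊥` with simple system `{γ₁, γ₂}`,
the set `J := I ∩ Ψ⁺` is an ideal of `Ψ⁺`: whenever `α ∈ J`, `β ∈ Ψ⁺` and
`α - β ∈ ℤ₊γ₁ + ℤ₊γ₂`, we have `β ∈ J`. -/
theorem ideal_restriction_is_ideal {ℓ : ℕ} (Φ : Finset (Fin ℓ → ℝ))
    (Δ : Fin ℓ → Fin ℓ → ℝ)
    (hΦ : IsIrredCrystRootSystem Φ) (hΔ : IsSimpleSystem Φ Δ)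
    (I : Finset (Fin ℓ → ℝ)) (hI : IsIdeal Φ Δ I)
    (Y : Set (Fin ℓ → ℝ)) (B : Finset (Fin ℓ → ℝ)) (hB : B ⊆ posRoots Φ Δ)
    (hY : Y = ⋂ c ∈ B, Hset c)
    (hcodim : Module.finrank ℝ (Submodule.span ℝ Y) + 2 = ℓ)
    (γ₁ γ₂ : Fin ℓ → ℝ)
    (hγ₁ : γ₁ ∈ posRoots Φ Δ) (hγ₁Y : ∀ y ∈ Y, dot γ₁ y = 0)
    (hγ₂ : γ₂ ∈ posRoots Φ Δ) (hγ₂Y : ∀ y ∈ Y, dot γ₂ y = 0)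
    (hγne : γ₁ ≠ γ₂)
    (hsimple : ∀ δ ∈ posRoots Φ Δ, (∀ y ∈ Y, dot δ y = 0) →
        ∃ a b : ℕ, δ = (a : ℝ) • γ₁ + (b : ℝ) • γ₂) :
    ∀ α ∈ I, (∀ y ∈ Y, dot α y = 0) →
      ∀ β ∈ posRoots Φ Δ, (∀ y ∈ Y, dot β y = 0) →
        (∃ a b : ℕ, α - β = (a : ℝ) • γ₁ + (b : ℝ) • γ₂) →
          β ∈ I :=
  ideal_restriction_is_ideal_general Φ Δ I hI Y γ₁ γ₂ hγ₁ hγ₂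

end
end
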